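/- arXiv:1806.10535 — 2 statements merged into one kernel-verified Lean document; each statement's English description precedes it below -/
import Mathlib

section
/- For all integers d ≥ 1 and all s ∈ [0,1], the inequality d·B_s(d,d)·√(1 − (I_s(d,d))^(1/d)) ≥ s^d·(1−s)^d holds, with equality if and only if s = 0 or s = 1, where B_s(a,b) = ∫₀^s t^(a−1)(1−t)^(b−1) dt is the incomplete Beta function and I_s(a,b) = B_s(a,b)/B(a,b) is its regularized version. -/
open Real

/-!
Write `w t = t ^ (d - 1) * (1 - t) ^ (d - 1)`, `S, M, T` for the integrals of `w, t w, t² w`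
over `[0, s]`, and `p = s ^ d * (1 - s) ^ d`. Differentiating `p` and `s p` gives
`d (S - 2M) = p` and `(d + 1) M - (2d + 1) T = s p`. The first turns `1 - (p / (d S))²` into
`4 M (S - M) / S²`, so the claim for `0 < s < 1` becomes `I_s < (4 M (S - M) / S²) ^ d`.
With the second, the derivative of `log (M ^ d (S - M) ^ d / S ^ (2d + 1))` is a positive multiple
of `M² - S T < 0` (strict Cauchy–Schwarz), so this function is strictly decreasing on `(0, 1]`;
comparing its values at `s` and at `1`, where `M = S / 2` by symmetry, is exactly the claim.
-/

open Set MeasureTheory intervalIntegral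
open scoped Interval

theorem sq_integral_mul_lt_integral_mul_integral {w : ℝ → ℝ} {a b : ℝ} (hw : Continuous w)
    (hpos : ∀ t ∈ Ioo a b, 0 < w t) (hab : a < b) :
    (∫ t in a..b, t * w t) ^ 2 < (∫ t in a..b, w t) * ∫ t in a..b, t ^ 2 * w t := by
  set S := ∫ t in a..b, w t
  set M := ∫ t in a..b, t * w t
  set c := M / S
  have hS : 0 < S := intervalIntegral_pos_of_pos_on (hw.intervalIntegrable _ _) hpos hab
  have hint : IntervalIntegrable (fun t => t * w t) volume a b :=
    (continuous_id.mul hw).intervalIntegrable _ _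
  have hint2 : IntervalIntegrable (fun t => t ^ 2 * w t) volume a b :=
    ((continuous_pow 2).mul hw).intervalIntegrable _ _
  have hvar : ∫ t in a..b, (t - c) ^ 2 * w t = (∫ t in a..b, t ^ 2 * w t) - M ^ 2 / S := by
    have hexpand : (fun t => (t - c) ^ 2 * w t)
        = fun t => t ^ 2 * w t - 2 * c * (t * w t) + c ^ 2 * w t := by
      ext t; ring
    rw [hexpand,
      integral_add (hint2.sub (hint.const_mul _)) ((hw.intervalIntegrable _ _).const_mul _),
      integral_sub hint2 (hint.const_mul _), intervalIntegral.integral_const_mul,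
      intervalIntegral.integral_const_mul]
    change _ - 2 * c * M + c ^ 2 * S = _
    simp only [c]
    field_simp
    ring
  -- the integrand vanishes only at `t = c`, a null set
  have hvar_pos : 0 < ∫ t in a..b, (t - c) ^ 2 * w t := by
    have hnonneg : 0 ≤ᵐ[volume.restrict (Ι a b)] fun t => (t - c) ^ 2 * w t := by
      rw [uIoc_of_le hab.le, ← restrict_Ioo_eq_restrict_Ioc]
      exact (ae_restrict_iff' measurableSet_Ioo).2
        (.of_forall fun t ht => mul_nonneg (sq_nonneg _) (hpos t ht).le)
    have hint_var : IntervalIntegrable (fun t => (t - c) ^ 2 * w t) volume a b :=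
      (((continuous_id.sub continuous_const).pow 2).mul hw).intervalIntegrable _ _
    refine (integral_pos_iff_support_of_nonneg_ae' hnonneg hint_var).2 ⟨hab, ?_⟩
    calc (0 : ENNReal) < volume (Ioo a b \ {c}) := by
          rw [measure_sdiff_null (measure_singleton c)]; simp [hab]
      _ ≤ volume (Function.support (fun t => (t - c) ^ 2 * w t) ∩ Ioc a b) :=
          measure_mono fun t ht => ⟨(mul_pos (sq_pos_of_ne_zero (sub_ne_zero.2 ht.2))
            (hpos t ht.1)).ne', Ioo_subset_Ioc_self ht.1⟩
  rw [hvar] at hvar_pos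
  rw [← sub_pos]
  calc 0 < S * ((∫ t in a..b, t ^ 2 * w t) - M ^ 2 / S) := mul_pos hS hvar_pos
    _ = _ := by field_simp

noncomputable def betaWeight (e : ℕ) (t : ℝ) : ℝ := t ^ e * (1 - t) ^ e

/-- `betaMoment (d - 1) 0 x` is the incomplete Beta function `B_x(d, d)`. -/
noncomputable def betaMoment (e k : ℕ) (x : ℝ) : ℝ :=
  ∫ t in (0 : ℝ)..x, t ^ k * betaWeight e t

section BetaMoments

variable (e : ℕ)

@[fun_prop]
theorem continuous_betaWeight : Continuous (betaWeight e) := by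
  unfold betaWeight; fun_prop

theorem betaWeight_pos {t : ℝ} (h0 : 0 < t) (h1 : t < 1) : 0 < betaWeight e t :=
  mul_pos (pow_pos h0 e) (pow_pos (sub_pos.2 h1) e)

theorem hasDerivAt_betaWeight_succ (t : ℝ) :
    HasDerivAt (betaWeight (e + 1)) ((e + 1) * ((1 - 2 * t) * betaWeight e t)) t := by
  have h := (hasDerivAt_pow (e + 1) t).fun_mul (((hasDerivAt_id' t).const_sub 1).fun_pow (e + 1))
  unfold betaWeight
  refine h.congr_deriv ?_
  simp only [Nat.add_sub_cancel]; push_cast; ring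

theorem hasDerivAt_betaMoment (k : ℕ) (x : ℝ) :
    HasDerivAt (betaMoment e k) (x ^ k * betaWeight e x) x :=
  (Continuous.integral_hasStrictDerivAt (by fun_prop) 0 x).hasDerivAt

theorem intervalIntegrable_betaMoment (k : ℕ) (a b : ℝ) :
    IntervalIntegrable (fun t => t ^ k * betaWeight e t) volume a b :=
  Continuous.intervalIntegrable (by fun_prop) _ _

theorem betaMoment_pos (k : ℕ) {x : ℝ} (h0 : 0 < x) (h1 : x ≤ 1) : 0 < betaMoment e k x :=
  intervalIntegral_pos_of_pos_on (intervalIntegrable_betaMoment e k _ _)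
    (fun _ ht => mul_pos (pow_pos ht.1 k) (betaWeight_pos e ht.1 (ht.2.trans_le h1))) h0

theorem betaMoment_succ_lt (k : ℕ) {x : ℝ} (h0 : 0 < x) (h1 : x ≤ 1) :
    betaMoment e (k + 1) x < betaMoment e k x := by
  rw [← sub_pos, betaMoment, betaMoment, ← integral_sub (intervalIntegrable_betaMoment e k _ _)
    (intervalIntegrable_betaMoment e (k + 1) _ _)]
  refine intervalIntegral_pos_of_pos_on (Continuous.intervalIntegrable (by fun_prop) _ _)
    (fun t ht => ?_) h0
  have ht1 : t < 1 := ht.2.trans_le h1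
  rw [show t ^ k * betaWeight e t - t ^ (k + 1) * betaWeight e t
    = t ^ k * (1 - t) * betaWeight e t by ring]
  exact mul_pos (mul_pos (pow_pos ht.1 k) (sub_pos.2 ht1)) (betaWeight_pos e ht.1 ht1)

-- the substitution `t ↦ 1 - t` fixes the weight
theorem betaMoment_one_one : betaMoment e 1 1 = betaMoment e 0 1 / 2 := by
  have hsymm : ∫ t in (0 : ℝ)..1, (1 - t) * betaWeight e t = betaMoment e 1 1 := by
    have := integral_comp_sub_left (fun t => t * betaWeight e t) (a := 0) (b := 1) 1
    simp only [sub_zero, sub_self] at this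
    rw [betaMoment]
    simp only [pow_one]
    rw [← this]
    congr 1; ext t
    simp only [betaWeight, sub_sub_cancel]; ring
  have hsub : ∫ t in (0 : ℝ)..1, (1 - t) * betaWeight e t
      = betaMoment e 0 1 - betaMoment e 1 1 := by
    rw [betaMoment, betaMoment, ← integral_sub (intervalIntegrable_betaMoment e 0 _ _)
      (intervalIntegrable_betaMoment e 1 _ _)]
    congr 1; ext t; ring
  linarith

theorem betaWeight_succ_zero : betaWeight (e + 1) 0 = 0 := by
  simp [betaWeight]

theorem betaMoment_zero_sub_two_mul_one (s : ℝ) :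
    (e + 1) * (betaMoment e 0 s - 2 * betaMoment e 1 s) = betaWeight (e + 1) s := by
  have hftc := integral_eq_sub_of_hasDerivAt (fun t _ => hasDerivAt_betaWeight_succ e t)
    (Continuous.intervalIntegrable (by fun_prop) 0 s)
  rw [betaWeight_succ_zero, sub_zero] at hftc
  rw [← hftc, betaMoment, betaMoment, ← intervalIntegral.integral_const_mul,
    ← integral_sub (intervalIntegrable_betaMoment e 0 0 s)
      ((intervalIntegrable_betaMoment e 1 0 s).const_mul 2),
    ← intervalIntegral.integral_const_mul]
  congr 1; ext t; ring

theorem betaMoment_one_sub_two_mul_two (s : ℝ) :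
    (e + 2) * betaMoment e 1 s - (2 * e + 3) * betaMoment e 2 s = s * betaWeight (e + 1) s := by
  have hderiv (t : ℝ) : HasDerivAt (fun u => u * betaWeight (e + 1) u)
      ((e + 2) * (t ^ 1 * betaWeight e t) - (2 * e + 3) * (t ^ 2 * betaWeight e t)) t := by
    refine ((hasDerivAt_id' t).fun_mul (hasDerivAt_betaWeight_succ e t)).congr_deriv ?_
    simp only [betaWeight]; ring
  have hftc := integral_eq_sub_of_hasDerivAt (fun t _ => hderiv t)
    (Continuous.intervalIntegrable (by fun_prop) 0 s)
  rw [betaWeight_succ_zero, mul_zero, sub_zero,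
    integral_sub ((intervalIntegrable_betaMoment e 1 0 s).const_mul _)
      ((intervalIntegrable_betaMoment e 2 0 s).const_mul _),
    intervalIntegral.integral_const_mul, intervalIntegral.integral_const_mul] at hftc
  exact hftc

theorem sq_betaMoment_one_lt {s : ℝ} (h0 : 0 < s) (h1 : s ≤ 1) :
    betaMoment e 1 s ^ 2 < betaMoment e 0 s * betaMoment e 2 s := by
  simpa only [betaMoment, pow_zero, one_mul, pow_one] using
    sq_integral_mul_lt_integral_mul_integral (continuous_betaWeight e)
      (fun t ht => betaWeight_pos e ht.1 (ht.2.trans_le h1)) h0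

noncomputable def betaLogRatio (x : ℝ) : ℝ :=
  (e + 1) * log (betaMoment e 1 x) + (e + 1) * log (betaMoment e 0 x - betaMoment e 1 x)
    - (2 * e + 3) * log (betaMoment e 0 x)

theorem hasDerivAt_betaLogRatio {x : ℝ} (h0 : 0 < x) (h1 : x ≤ 1) :
    HasDerivAt (betaLogRatio e)
      ((2 * e + 3) * betaWeight e x * (betaMoment e 1 x ^ 2 - betaMoment e 0 x * betaMoment e 2 x)
        / (betaMoment e 0 x * betaMoment e 1 x * (betaMoment e 0 x - betaMoment e 1 x))) x := by
  have hS := betaMoment_pos e 0 h0 h1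
  have hM := betaMoment_pos e 1 h0 h1
  have hSM : 0 < betaMoment e 0 x - betaMoment e 1 x := sub_pos.2 (betaMoment_succ_lt e 0 h0 h1)
  have hlogM := (hasDerivAt_betaMoment e 1 x).log hM.ne'
  have hlogSM := ((hasDerivAt_betaMoment e 0 x).fun_sub (hasDerivAt_betaMoment e 1 x)).log hSM.ne'
  have hlogS := (hasDerivAt_betaMoment e 0 x).log hS.ne'
  refine (((hlogM.const_mul _).add (hlogSM.const_mul _)).sub (hlogS.const_mul _)).congr_deriv ?_
  have hA := betaMoment_zero_sub_two_mul_one e x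
  have hB := betaMoment_one_sub_two_mul_two e x
  field_simp
  linear_combination (betaWeight e x * x * betaMoment e 0 x) * hA
    - (betaWeight e x * betaMoment e 0 x) * hB

theorem strictAntiOn_betaLogRatio : StrictAntiOn (betaLogRatio e) (Ioc 0 1) := by
  refine strictAntiOn_of_deriv_neg (convex_Ioc 0 1)
    (fun x hx => (hasDerivAt_betaLogRatio e hx.1 hx.2).continuousAt.continuousWithinAt) ?_
  rw [interior_Ioc]
  intro x hx
  have hS := betaMoment_pos e 0 hx.1 hx.2.le
  have hM := betaMoment_pos e 1 hx.1 hx.2.le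
  have hSM : 0 < betaMoment e 0 x - betaMoment e 1 x :=
    sub_pos.2 (betaMoment_succ_lt e 0 hx.1 hx.2.le)
  rw [(hasDerivAt_betaLogRatio e hx.1 hx.2.le).deriv]
  exact div_neg_of_neg_of_pos (mul_neg_of_pos_of_neg (mul_pos (by positivity)
    (betaWeight_pos e hx.1 hx.2)) (sub_neg.2 (sq_betaMoment_one_lt e hx.1 hx.2.le)))
    (mul_pos (mul_pos hS hM) hSM)

theorem betaMoment_div_lt_pow {s : ℝ} (h0 : 0 < s) (h1 : s < 1) :
    betaMoment e 0 s / betaMoment e 0 1 <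
      (4 * betaMoment e 1 s * (betaMoment e 0 s - betaMoment e 1 s) / betaMoment e 0 s ^ 2)
        ^ (e + 1) := by
  have hL := strictAntiOn_betaLogRatio e ⟨h0, h1.le⟩ ⟨one_pos, le_rfl⟩ h1
  have hS := betaMoment_pos e 0 h0 h1.le
  have hM := betaMoment_pos e 1 h0 h1.le
  have hSM : 0 < betaMoment e 0 s - betaMoment e 1 s :=
    sub_pos.2 (betaMoment_succ_lt e 0 h0 h1.le)
  have hS1 := betaMoment_pos e 0 one_pos le_rfl
  rw [betaLogRatio, betaLogRatio, betaMoment_one_one, sub_half] at hL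
  rw [← log_lt_log_iff (by positivity) (by positivity), log_div hS.ne' hS1.ne', log_pow,
    log_div (by positivity) (by positivity), log_mul (by positivity) hSM.ne',
    log_mul (by norm_num) hM.ne', log_pow, show (4 : ℝ) = 2 ^ 2 by norm_num, log_pow]
  rw [log_div hS1.ne' two_ne_zero] at hL
  push_cast
  linarith

theorem betaWeight_succ_lt {s : ℝ} (h0 : 0 < s) (h1 : s < 1) :
    betaWeight (e + 1) s < (e + 1) * betaMoment e 0 s *
      √(1 - (betaMoment e 0 s / betaMoment e 0 1) ^ ((1 : ℝ) / (e + 1))) := by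
  set S := betaMoment e 0 s
  set M := betaMoment e 1 s
  set p := betaWeight (e + 1) s
  have hS : 0 < S := betaMoment_pos e 0 h0 h1.le
  have hM : 0 < M := betaMoment_pos e 1 h0 h1.le
  have hSM : 0 < S - M := sub_pos.2 (betaMoment_succ_lt e 0 h0 h1.le)
  have hS1 : 0 < betaMoment e 0 1 := betaMoment_pos e 0 one_pos le_rfl
  have hp : 0 < p := betaWeight_pos (e + 1) h0 h1
  have hdS : 0 < (e + 1) * S := by positivity
  have hA : (e + 1) * (S - 2 * M) = p := betaMoment_zero_sub_two_mul_one e s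
  have hvar : 1 - (p / ((e + 1) * S)) ^ 2 = 4 * M * (S - M) / S ^ 2 := by
    field_simp
    linear_combination ((e + 1) * (S - 2 * M) + p) * hA
  have hroot : (S / betaMoment e 0 1) ^ ((1 : ℝ) / (e + 1)) < 1 - (p / ((e + 1) * S)) ^ 2 := by
    rw [hvar, one_div, rpow_inv_lt_iff_of_pos (by positivity) (by positivity) (by positivity),
      show ((e : ℝ) + 1) = ((e + 1 : ℕ) : ℝ) by push_cast; ring, rpow_natCast]
    exact betaMoment_div_lt_pow e h0 h1
  calc p = (e + 1) * S * (p / ((e + 1) * S)) := by field_simp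
    _ < _ := mul_lt_mul_of_pos_left ((lt_sqrt (by positivity)).2 (by linarith)) hdS

end BetaMoments

theorem incomplete_beta_sqrt_inequality (d : ℕ) (hd : 1 ≤ d) (s : ℝ)
    (hs : s ∈ Set.Icc (0:ℝ) 1)
    (B : ℝ → ℝ)
    (hB : ∀ x, B x = ∫ t in (0:ℝ)..x, t ^ (d - 1) * (1 - t) ^ (d - 1)) :
    (d : ℝ) * B s * Real.sqrt (1 - (B s / B 1) ^ ((1 : ℝ) / d)) ≥ s ^ d * (1 - s) ^ d ∧
    ((d : ℝ) * B s * Real.sqrt (1 - (B s / B 1) ^ ((1 : ℝ) / d)) = s ^ d * (1 - s) ^ d ↔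
      s = 0 ∨ s = 1) := by
  obtain ⟨e, rfl⟩ := Nat.exists_eq_add_of_le' hd
  obtain rfl : B = betaMoment e 0 := funext fun x => by simp [hB, betaMoment, betaWeight]
  rcases eq_or_lt_of_le hs.1 with rfl | h0
  · simp [betaMoment]
  rcases eq_or_lt_of_le hs.2 with rfl | h1
  · simp [div_self (betaMoment_pos e 0 one_pos le_rfl).ne']
  have hlt := betaWeight_succ_lt e h0 h1
  push_cast
  refine ⟨hlt.le, iff_of_false hlt.ne' ?_⟩
  rintro (rfl | rfl)
  exacts [h0.false, h1.false]
end

section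
/- For every integer d ≥ 1, the function f(s) = d·B_s(d,d) + s^d(1−s)^d·(d − 2ds − √(d²(1−2s)² + 1 + 2d)) satisfies f(s) ≥ 0 for all s ∈ (0,1), where B_s(d,d) is the incomplete Beta function. -/
/-!
Let `F(x)` be the expression in question, `u = 1 - 2x` and `y = √(d²u² + 1 + 2d)`. Then `F(0) = 0`,
and differentiating (using `x(1 - x) = (1 - u²)/4` and `y' = -2d²u/y`) gives
`F'(x) = d · x^(d-1)(1-x)^(d-1) · (A y - u B) / y` with `A = (1 + u²)/2 + d u²` and
`B = d²u² + d u²/2 + 3d/2 + 1`. Since `(A y)² - (u B)² = (1 + 2d)(1 - u²)²/4 ≥ 0` and `A ≥ 0`,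
we have `A y ≥ |u B|`, so `F` is nondecreasing on `[0, 1]`.
-/

open Real Set

noncomputable def betaGap (d : ℕ) (s : ℝ) : ℝ :=
  (d : ℝ) * (∫ t in (0:ℝ)..s, t ^ (d - 1) * (1 - t) ^ (d - 1)) +
    s ^ d * (1 - s) ^ d * ((d : ℝ) - 2 * d * s - √((d : ℝ) ^ 2 * (1 - 2 * s) ^ 2 + 1 + 2 * d))

noncomputable def betaGapSlope (c u y : ℝ) : ℝ :=
  ((1 + u ^ 2) / 2 + c * u ^ 2) * y - u * (c ^ 2 * u ^ 2 + c * u ^ 2 / 2 + 3 * c / 2 + 1)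

lemma betaGapSlope_nonneg {c : ℝ} (hc : 0 ≤ c) (u : ℝ) :
    0 ≤ betaGapSlope c u √(c ^ 2 * u ^ 2 + 1 + 2 * c) := by
  set y := √(c ^ 2 * u ^ 2 + 1 + 2 * c)
  have hy2 : y ^ 2 = c ^ 2 * u ^ 2 + 1 + 2 * c := sq_sqrt (by positivity)
  have hsq : (u * (c ^ 2 * u ^ 2 + c * u ^ 2 / 2 + 3 * c / 2 + 1)) ^ 2 ≤
      (((1 + u ^ 2) / 2 + c * u ^ 2) * y) ^ 2 := by
    have hdiff : (((1 + u ^ 2) / 2 + c * u ^ 2) * y) ^ 2 -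
        (u * (c ^ 2 * u ^ 2 + c * u ^ 2 / 2 + 3 * c / 2 + 1)) ^ 2 =
        (1 + 2 * c) * (1 - u ^ 2) ^ 2 / 4 := by
      rw [mul_pow, hy2]; ring
    have : 0 ≤ (1 + 2 * c) * (1 - u ^ 2) ^ 2 / 4 := by positivity
    linarith
  have := (abs_le_of_sq_le_sq' hsq (by positivity)).2
  unfold betaGapSlope
  linarith

lemma hasDerivAt_betaGap {d : ℕ} (hd : d ≠ 0) (x : ℝ) :
    HasDerivAt (betaGap d)
      (d * (x ^ (d - 1) * (1 - x) ^ (d - 1)) *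
        betaGapSlope d (1 - 2 * x) √((d : ℝ) ^ 2 * (1 - 2 * x) ^ 2 + 1 + 2 * d) /
        √((d : ℝ) ^ 2 * (1 - 2 * x) ^ 2 + 1 + 2 * d)) x := by
  have hR : 0 < (d : ℝ) ^ 2 * (1 - 2 * x) ^ 2 + 1 + 2 * d := by positivity
  have hcont : Continuous fun t : ℝ => t ^ (d - 1) * (1 - t) ^ (d - 1) := by fun_prop
  have hint := intervalIntegral.integral_hasDerivAt_right (hcont.intervalIntegrable 0 x)
    (hcont.stronglyMeasurableAtFilter _ _) hcont.continuousAt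
  have hprod := (hasDerivAt_pow d x).mul (((hasDerivAt_id x).const_sub 1).pow d)
  have hroot := (((((hasDerivAt_id x).const_mul 2).const_sub 1).pow 2).const_mul ((d : ℝ) ^ 2)
    |>.add_const 1 |>.add_const (2 * (d : ℝ))).sqrt hR.ne'
  have hlin := ((hasDerivAt_id x).const_mul (2 * (d : ℝ))).const_sub (d : ℝ)
  refine ((hint.const_mul (d : ℝ)).add (hprod.mul (hlin.sub hroot))).congr_deriv ?_
  have hy := sqrt_pos.2 hR
  have hy2 := mul_self_sqrt hR.le
  simp only [Pi.mul_apply, Pi.pow_apply, Pi.sub_apply, id, Nat.cast_ofNat]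
  set y := √((d : ℝ) ^ 2 * (1 - 2 * x) ^ 2 + 1 + 2 * d)
  rw [← pow_sub_one_mul hd x, ← pow_sub_one_mul hd (1 - x), eq_div_iff hy.ne']
  unfold betaGapSlope
  field_simp
  linear_combination (-2 * x ^ (d - 1) * (1 - x) ^ (d - 1) * (1 - 2 * x)) * hy2

lemma betaGap_zero {d : ℕ} (hd : d ≠ 0) : betaGap d 0 = 0 := by
  simp [betaGap, hd]

lemma monotoneOn_betaGap {d : ℕ} (hd : d ≠ 0) : MonotoneOn (betaGap d) (Icc 0 1) := by
  have hderiv := hasDerivAt_betaGap hd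
  refine monotoneOn_of_hasDerivWithinAt_nonneg (convex_Icc 0 1)
    (fun x _ => (hderiv x).continuousAt.continuousWithinAt)
    (fun x _ => (hderiv x).hasDerivWithinAt) ?_
  rintro x hx
  rw [interior_Icc] at hx
  have hweight : 0 ≤ (d : ℝ) * (x ^ (d - 1) * (1 - x) ^ (d - 1)) :=
    mul_nonneg d.cast_nonneg (mul_nonneg (pow_nonneg hx.1.le _) (pow_nonneg (by linarith [hx.2]) _))
  exact div_nonneg (mul_nonneg hweight (betaGapSlope_nonneg d.cast_nonneg _)) (sqrt_nonneg _)

theorem technical_beta_lemma (d : ℕ) (hd : 1 ≤ d) (s : ℝ) (hs : s ∈ Set.Ioo (0:ℝ) 1) :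
    0 ≤ (d : ℝ) * (∫ t in (0:ℝ)..s, t ^ (d - 1) * (1 - t) ^ (d - 1)) +
      s ^ d * (1 - s) ^ d *
        ((d : ℝ) - 2 * d * s - Real.sqrt ((d : ℝ) ^ 2 * (1 - 2 * s) ^ 2 + 1 + 2 * d)) := by
  have hd0 : d ≠ 0 := Nat.one_le_iff_ne_zero.mp hd
  have hmono := monotoneOn_betaGap hd0 (left_mem_Icc.2 zero_le_one) (Ioo_subset_Icc_self hs) hs.1.le
  rwa [betaGap_zero hd0] at hmono
end
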